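/- arXiv:1305.6212 — 4 statements merged into one kernel-verified Lean document; each statement's English description precedes it below -/
import Mathlib

section
/- If x and z are Artin–Schreier elements of A with xz ≠ zx, then the F-subalgebra B = F[x, z] generated by x and z is a quaternion algebra over its center: the center K of B satisfies dim_F K ≤ 2 (K is either F·1 or a quadratic field extension of F), and B is a central simple K-algebra with dim_K B = 4; in particular B is a proper subalgebra of A. -/
/-- `x` is an Artin–Schreier element: `x² + x ∈ F·1`. -/
def IsArtinSchreier (F : Type*) {A : Type*} [Field F] [Ring A] [Algebra F A] (x : A) : Prop :=
  x ^ 2 + x ∈ Set.range (algebraMap F A)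

/-- `y` is a square-central element: `y² ∈ F·1`. -/
def IsSquareCentral (F : Type*) {A : Type*} [Field F] [Ring A] [Algebra F A] (y : A) : Prop :=
  y ^ 2 ∈ Set.range (algebraMap F A)

/-- `(x, y, z, u)` is a quadruple of generators of the biquaternion algebra `A`. -/
def IsQuadruple (F : Type*) {A : Type*} [Field F] [Ring A] [Algebra F A]
    (q : A × A × A × A) : Prop :=
  match q with
  | (x, y, z, u) =>
    y ≠ 0 ∧ u ≠ 0 ∧
    IsArtinSchreier F x ∧ IsSquareCentral F y ∧
    IsArtinSchreier F z ∧ IsSquareCentral F u ∧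
    x * y + y * x = y ∧ x * z = z * x ∧ x * u = u * x ∧
    y * z = z * y ∧ y * u = u * y ∧ z * u + u * z = u

/-! Put `c = x z + z x`. In characteristic 2, `x² + x ∈ F` gives `x c + c x = c`, and likewise
`z c + c z = c`; hence `c²` and `x + z + c` commute with `x` and `z`, so they lie in the centre `K`
of `B = F[x, z]`. As `z = (x + z + c) + x + c`, the `K`-span of `1, x, c, x c` is stable under left
multiplication by `x` and `z`, so it is all of `B`. Applying `v ↦ x v + v x` and `v ↦ c v + v c` to
a relation shows that these four elements are `K`-independent, because `c ≠ 0` and `B` has no zero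
divisors; thus `[B : K] = 4`. Since `B` is a division algebra, `[B : F] = 4 [K : F]` divides
`[A : F] = 16`, and `B = A` would force `K = F`. So `[B : F] ≤ 8` and `[K : F] ≤ 2`. -/

theorem commute_mul_self_of_mul_add_mul_eq {A : Type*} [Ring A] {x c : A}
    (h : x * c + c * x = c) : Commute (c * c) x := by
  unfold Commute SemiconjBy
  linear_combination (norm := noncomm_ring) c * h - h * c

section CharTwo

variable {A : Type*} [Ring A] [CharP A 2] {x z : A}

theorem mul_anticomm_add_anticomm_mul_eq_anticomm (h : Commute (x ^ 2 + x) z) :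
    x * (x * z + z * x) + (x * z + z * x) * x = x * z + z * x := by
  linear_combination (norm := noncomm_ring)
    h.eq + (z * x ^ 2 + x * z * x - x * z) * CharTwo.two_eq_zero (R := A)

theorem commute_add_add_anticomm (h : Commute (x ^ 2 + x) z) :
    Commute (x + z + (x * z + z * x)) x := by
  unfold Commute SemiconjBy
  linear_combination (norm := noncomm_ring)
    (-1 : A) * mul_anticomm_add_anticomm_mul_eq_anticomm h +
      (x * z * x + z * x * x - x * z) * CharTwo.two_eq_zero (R := A)

end CharTwo

theorem IsArtinSchreier.commute {F D : Type*} [Field F] [Ring D] [Algebra F D] {x : D}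
    (hx : IsArtinSchreier F x) (t : D) : Commute (x ^ 2 + x) t := by
  obtain ⟨f, hf⟩ := hx
  exact hf ▸ Algebra.commutes f t

theorem IsArtinSchreier.of_injective {F D A : Type*} [Field F] [Ring D] [Ring A] [Algebra F D]
    [Algebra F A] (f : D →ₐ[F] A) (hf : Function.Injective f) {x : D}
    (hx : IsArtinSchreier F (f x)) : IsArtinSchreier F x := by
  obtain ⟨r, hr⟩ := hx
  exact ⟨r, hf (by simp [hr])⟩

instance Subring.isCentral_center (R : Type*) [Ring R] :
    Algebra.IsCentral (Subring.center R) R :=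
  ⟨fun w hw => Algebra.mem_bot.2
    ⟨⟨w, Subring.mem_center_iff.2 (Subalgebra.mem_center_iff.1 hw)⟩, rfl⟩⟩

section Generators

variable {F D : Type*} [CommRing F] [Ring D] [Algebra F D] {s : Set D}

theorem mem_center_of_adjoin_eq_top (hs : Algebra.adjoin F s = ⊤) {a : D}
    (h : ∀ b ∈ s, Commute a b) : a ∈ Subring.center D :=
  Subring.mem_center_iff.2 fun g =>
    (Algebra.commute_of_mem_adjoin_of_forall_mem_commute (b := g)
      (hs ▸ Algebra.mem_top) h).eq.symm

theorem mul_mem_span_center {a : D} (h : ∀ v ∈ s, a * v ∈ Submodule.span (Subring.center D) s)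
    {m : D} (hm : m ∈ Submodule.span (Subring.center D) s) :
    a * m ∈ Submodule.span (Subring.center D) s :=
  (Submodule.span_le (p := (Submodule.span _ s).comap (LinearMap.mulLeft _ a))).2 h hm

theorem Submodule.eq_top_of_one_mem_of_mul_mem (hs : Algebra.adjoin F s = ⊤)
    {M : Submodule (Subring.center D) D} (h1 : 1 ∈ M) (hmul : ∀ a ∈ s, ∀ m ∈ M, a * m ∈ M) :
    M = ⊤ := by
  suffices h : ∀ a ∈ Algebra.adjoin F s, ∀ m ∈ M, a * m ∈ M from
    eq_top_iff'.2 fun a => by simpa using h a (hs ▸ Algebra.mem_top) 1 h1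
  intro a ha
  induction ha using Algebra.adjoin_induction with
  | mem a ha => exact hmul a ha
  | algebraMap r =>
    exact fun m hm => M.smul_mem ⟨_, (Subalgebra.center F D).algebraMap_mem r⟩ hm
  | add a b _ _ ha hb => exact fun m hm => add_mul a b m ▸ M.add_mem (ha m hm) (hb m hm)
  | mul a b _ _ ha hb => exact fun m hm => mul_assoc a b m ▸ ha _ (hb m hm)

end Generators

section Quaternion

variable {D : Type*} [Ring D] [CharP D 2]

theorem linearIndependent_center_of_mul_add_mul_eq [NoZeroDivisors D] {x c : D} (hc : c ≠ 0)
    (h : x * c + c * x = c) : LinearIndependent (Subring.center D) ![1, x, c, x * c] := by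
  rw [Fintype.linearIndependent_iff]
  intro g hg
  simp only [Fin.sum_univ_four] at hg
  change (g 0 : D) * 1 + g 1 * x + g 2 * c + g 3 * (x * c) = 0 at hg
  have hk : ∀ i, ∀ t : D, t * g i = g i * t := fun i => Subring.mem_center_iff.1 (g i).2
  have two : (2 : D) = 0 := CharTwo.two_eq_zero
  -- `v ↦ x v + v x` kills `1` and `x` and fixes `c` and `x c`
  have h23 : (g 2 + g 3 * x : D) * c = 0 := by
    linear_combination (norm := noncomm_ring) x * hg + hg * x - hk 0 x - hk 1 x * x - hk 2 x * c
      - hk 3 x * (x * c) - g 2 * h - g 3 * x * h - (g 0 * x + g 1 * x * x : D) * two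
  have h23' : (g 2 + g 3 * x : D) = 0 := (mul_eq_zero.1 h23).resolve_right hc
  have h3 : (g 3 : D) * c = 0 := by
    linear_combination (norm := noncomm_ring)
      h23' * c + c * h23' - g 3 * h - hk 3 c * x - hk 2 c - g 2 * c * two
  have h3' : (g 3 : D) = 0 := (mul_eq_zero.1 h3).resolve_right hc
  have h2' : (g 2 : D) = 0 := by linear_combination (norm := noncomm_ring) h23' - h3' * x
  rw [h2', h3', zero_mul, zero_mul, add_zero, add_zero, mul_one] at hg
  have h1 : (g 1 : D) * c = 0 := by
    linear_combination (norm := noncomm_ring)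
      c * hg + hg * c - hk 0 c - hk 1 c * x - g 1 * h - g 0 * c * two
  have h1' : (g 1 : D) = 0 := (mul_eq_zero.1 h1).resolve_right hc
  have h0' : (g 0 : D) = 0 := by linear_combination (norm := noncomm_ring) hg - h1' * x
  intro i
  fin_cases i <;> exact Subtype.ext ‹_›

theorem mul_mem_span_of_sq_add_self_mem_center {x c m : D} (ha : x ^ 2 + x ∈ Subring.center D)
    (hm : m ∈ Submodule.span (Subring.center D) (Set.range ![1, x, c, x * c])) :
    x * m ∈ Submodule.span (Subring.center D) (Set.range ![1, x, c, x * c]) := by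
  set M := Submodule.span (Subring.center D) (Set.range ![1, x, c, x * c])
  have two : (2 : D) = 0 := CharTwo.two_eq_zero
  have basis_mem (i : Fin 4) : ![1, x, c, x * c] i ∈ M := Submodule.subset_span ⟨i, rfl⟩
  refine mul_mem_span_center ?_ hm
  rintro _ ⟨i, rfl⟩
  fin_cases i
  · exact (mul_one x).symm ▸ basis_mem 1
  · show x * x ∈ M
    rw [show x * x = (x ^ 2 + x) * 1 + x by linear_combination (norm := noncomm_ring) -x * two]
    exact M.add_mem (M.smul_mem ⟨_, ha⟩ (basis_mem 0)) (basis_mem 1)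
  · exact basis_mem 3
  · show x * (x * c) ∈ M
    rw [show x * (x * c) = (x ^ 2 + x) * c + x * c by
      linear_combination (norm := noncomm_ring) -x * c * two]
    exact M.add_mem (M.smul_mem ⟨_, ha⟩ (basis_mem 2)) (basis_mem 3)

theorem mul_mem_span_of_mul_add_mul_eq {x c m : D} (hxc : x * c + c * x = c)
    (hcc : c * c ∈ Subring.center D)
    (hm : m ∈ Submodule.span (Subring.center D) (Set.range ![1, x, c, x * c])) :
    c * m ∈ Submodule.span (Subring.center D) (Set.range ![1, x, c, x * c]) := by
  set M := Submodule.span (Subring.center D) (Set.range ![1, x, c, x * c])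
  have two : (2 : D) = 0 := CharTwo.two_eq_zero
  have basis_mem (i : Fin 4) : ![1, x, c, x * c] i ∈ M := Submodule.subset_span ⟨i, rfl⟩
  refine mul_mem_span_center ?_ hm
  rintro _ ⟨i, rfl⟩
  fin_cases i
  · exact (mul_one c).symm ▸ basis_mem 2
  · show c * x ∈ M
    rw [show c * x = x * c + c by linear_combination (norm := noncomm_ring) hxc - x * c * two]
    exact M.add_mem (basis_mem 3) (basis_mem 2)
  · exact (mul_one (c * c)) ▸ M.smul_mem ⟨_, hcc⟩ (basis_mem 0)
  · show c * (x * c) ∈ M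
    rw [show c * (x * c) = c * c * x + c * c by
      linear_combination (norm := noncomm_ring)
        hxc * c - (commute_mul_self_of_mul_add_mul_eq hxc).eq - x * c * c * two]
    exact M.add_mem (M.smul_mem ⟨_, hcc⟩ (basis_mem 1))
      ((mul_one (c * c)) ▸ M.smul_mem ⟨_, hcc⟩ (basis_mem 0))

variable {F : Type*} [Field F] [Algebra F D] {x z : D}

theorem span_center_eq_top_of_isArtinSchreier (hx : IsArtinSchreier F x)
    (hz : IsArtinSchreier F z) (hgen : Algebra.adjoin F {x, z} = ⊤) :
    Submodule.span (Subring.center D)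
      (Set.range ![1, x, x * z + z * x, x * (x * z + z * x)]) = ⊤ := by
  set c := x * z + z * x
  have hxc : x * c + c * x = c := mul_anticomm_add_anticomm_mul_eq_anticomm (hx.commute z)
  have hzc : z * c + c * z = c := by
    simpa only [c, add_comm (z * x)] using mul_anticomm_add_anticomm_mul_eq_anticomm (hz.commute x)
  have central {a : D} (hax : Commute a x) (haz : Commute a z) : a ∈ Subring.center D :=
    mem_center_of_adjoin_eq_top hgen (by simp [hax, haz])
  have ha : x ^ 2 + x ∈ Subring.center D := central (hx.commute x) (hx.commute z)
  have hcc : c * c ∈ Subring.center D := central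
    (commute_mul_self_of_mul_add_mul_eq hxc) (commute_mul_self_of_mul_add_mul_eq hzc)
  have hα : x + z + c ∈ Subring.center D := by
    refine central (commute_add_add_anticomm (hx.commute z)) ?_
    simpa only [c, add_comm z x, add_comm (z * x)] using commute_add_add_anticomm (hz.commute x)
  refine Submodule.eq_top_of_one_mem_of_mul_mem hgen (Submodule.subset_span ⟨0, rfl⟩) ?_
  simp only [Set.forall_mem_insert, Set.mem_singleton_iff, forall_eq]
  refine ⟨fun m hm => mul_mem_span_of_sq_add_self_mem_center ha hm, fun m hm => ?_⟩
  rw [show z * m = (x + z + c) * m + x * m + c * m by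
    linear_combination (norm := noncomm_ring) -(x * m + c * m) * CharTwo.two_eq_zero (R := D)]
  exact add_mem (add_mem (Submodule.smul_mem _ ⟨_, hα⟩ hm)
    (mul_mem_span_of_sq_add_self_mem_center ha hm)) (mul_mem_span_of_mul_add_mul_eq hxc hcc hm)

theorem finrank_center_eq_four_of_isArtinSchreier [NoZeroDivisors D] (hx : IsArtinSchreier F x)
    (hz : IsArtinSchreier F z) (hgen : Algebra.adjoin F {x, z} = ⊤) (hne : x * z ≠ z * x) :
    Module.finrank (Subring.center D) D = 4 := by
  have hc : x * z + z * x ≠ 0 := fun h => hne (CharTwo.add_eq_zero.1 h)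
  have : Nontrivial D := ⟨⟨_, _, hc⟩⟩
  have hli := linearIndependent_center_of_mul_add_mul_eq hc
    (mul_anticomm_add_anticomm_mul_eq_anticomm (hx.commute z))
  rw [Module.finrank_eq_card_basis
    (Module.Basis.mk hli (span_center_eq_top_of_isArtinSchreier hx hz hgen).ge), Fintype.card_fin]

end Quaternion

section Dimension

variable {F : Type*} [Field F]

theorem finrank_center_mul_finrank_center (D : Type*) [DivisionRing D] [Algebra F D] :
    Module.finrank F (Subalgebra.center F D) * Module.finrank (Subring.center D) D =
      Module.finrank F D := by
  let : Field (Subalgebra.center F D) := inferInstanceAs (Field (Subring.center D))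
  exact Module.finrank_mul_finrank F (Subalgebra.center F D) D

variable {A : Type*} [DivisionRing A] [Algebra F A]

theorem Subalgebra.finrank_dvd_finrank [FiniteDimensional F A] (B : Subalgebra F A) :
    Module.finrank F B ∣ Module.finrank F A := by
  let := divisionRingOfFiniteDimensional F B
  exact ⟨_, (Module.finrank_mul_finrank F B A).symm⟩

theorem Subalgebra.finrank_center_le_two_and_ne_top (hcentral : Subalgebra.center F A = ⊥)
    (hdim : Module.finrank F A = 16) (B : Subalgebra F A)
    (hB : Module.finrank (Subring.center B) B = 4) :
    Module.finrank F (Subalgebra.center F B) ≤ 2 ∧ B ≠ ⊤ := by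
  have : FiniteDimensional F A := .of_finrank_pos (by omega)
  let := divisionRingOfFiniteDimensional F B
  have hmul := finrank_center_mul_finrank_center (F := F) B
  rw [hB] at hmul
  have hne : B ≠ ⊤ := by
    rintro rfl
    have : Algebra.IsCentral F A := ⟨hcentral.le⟩
    have : Algebra.IsCentral F (⊤ : Subalgebra F A) :=
      .of_algEquiv F A _ Subalgebra.topEquiv.symm
    have h1 := Subalgebra.finrank_eq_one_iff.2
      (Algebra.IsCentral.center_eq_bot F (⊤ : Subalgebra F A))
    rw [h1, (Subalgebra.topEquiv (R := F) (A := A)).toLinearEquiv.finrank_eq, hdim] at hmul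
    omega
  have hlt : Module.finrank F B < 16 := hdim ▸ Subalgebra.finrank_toSubmodule B ▸
    Submodule.finrank_lt (mt Algebra.toSubmodule_eq_top.1 hne)
  obtain ⟨m, hm⟩ := hdim ▸ B.finrank_dvd_finrank
  rw [← hmul] at hm hlt
  refine ⟨?_, hne⟩
  have : Module.finrank F (Subalgebra.center F B) < 4 := by omega
  interval_cases Module.finrank F (Subalgebra.center F B) <;> omega

end Dimension

set_option synthInstance.maxHeartbeats 1000000 in
theorem adjoin_artinSchreier_isQuaternion_general (F A : Type*) [Field F] [CharP F 2]
    [DivisionRing A] [Algebra F A]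
    (hcentral : Subalgebra.center F A = ⊥) (hdim : Module.finrank F A = 16)
    (x z : A) (hx : IsArtinSchreier F x) (hz : IsArtinSchreier F z)
    (hne : x * z ≠ z * x) :
    Module.finrank F (Subalgebra.center F (Algebra.adjoin F ({x, z} : Set A))) ≤ 2 ∧
    Algebra.IsCentral (Subring.center (Algebra.adjoin F ({x, z} : Set A)))
      (Algebra.adjoin F ({x, z} : Set A)) ∧
    IsSimpleRing (Algebra.adjoin F ({x, z} : Set A)) ∧
    Module.finrank (Subring.center (Algebra.adjoin F ({x, z} : Set A)))
      (Algebra.adjoin F ({x, z} : Set A)) = 4 ∧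
    Algebra.adjoin F ({x, z} : Set A) ≠ ⊤ := by
  set B := Algebra.adjoin F ({x, z} : Set A)
  have : CharP B 2 := charP_of_injective_algebraMap' F 2
  let x' : B := ⟨x, Algebra.subset_adjoin (by simp)⟩
  let z' : B := ⟨z, Algebra.subset_adjoin (by simp)⟩
  have hgen : Algebra.adjoin F {x', z'} = ⊤ := by
    rw [← Algebra.adjoin_adjoin_coe_preimage]
    congr 1
    ext w
    simp [x', z', Subtype.ext_iff]
  have hB4 : Module.finrank (Subring.center B) B = 4 :=
    finrank_center_eq_four_of_isArtinSchreier
      (hx.of_injective (x := x') B.val Subtype.val_injective)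
      (hz.of_injective (x := z') B.val Subtype.val_injective) hgen
      (fun h => hne congr(Subtype.val $h))
  obtain ⟨hK, hBtop⟩ := B.finrank_center_le_two_and_ne_top hcentral hdim hB4
  have : FiniteDimensional F A := .of_finrank_pos (by omega)
  let := divisionRingOfFiniteDimensional F B
  exact ⟨hK, inferInstance, DivisionRing.isSimpleRing B, hB4, hBtop⟩

set_option synthInstance.maxHeartbeats 1000000 in
/-- If `x` and `z` are non-commuting Artin–Schreier elements of a biquaternion division
algebra `A`, then `B = F[x, z]` is a quaternion algebra over its center `K`: `dim_F K ≤ 2`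
(`K` is `F·1` or a quadratic extension of `F`), `B` is a central simple `K`-algebra with
`dim_K B = 4`, and `B` is a proper subalgebra of `A`. -/
theorem adjoin_artinSchreier_isQuaternion (F A : Type*) [Field F] [CharP F 2]
    [DivisionRing A] [Algebra F A]
    (hcentral : Subalgebra.center F A = ⊥) (hdim : Module.finrank F A = 16)
    (hbiquat : ∃ q : A × A × A × A, IsQuadruple F q)
    (x z : A) (hx : IsArtinSchreier F x) (hz : IsArtinSchreier F z)
    (hne : x * z ≠ z * x) :
    Module.finrank F (Subalgebra.center F (Algebra.adjoin F ({x, z} : Set A))) ≤ 2 ∧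
    Algebra.IsCentral (Subring.center (Algebra.adjoin F ({x, z} : Set A)))
      (Algebra.adjoin F ({x, z} : Set A)) ∧
    IsSimpleRing (Algebra.adjoin F ({x, z} : Set A)) ∧
    Module.finrank (Subring.center (Algebra.adjoin F ({x, z} : Set A)))
      (Algebra.adjoin F ({x, z} : Set A)) = 4 ∧
    Algebra.adjoin F ({x, z} : Set A) ≠ ⊤ :=
  adjoin_artinSchreier_isQuaternion_general F A hcentral hdim x z hx hz hne
end

section
/- If x and z are Artin–Schreier elements of A with xz ≠ zx, then there exists w ∈ A with w ∉ F·1 such that w is either Artin–Schreier or square-central and w commutes with both x and z (wx = xw and wz = zw). -/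
open Module LinearMap

theorem finrank_le_two_mul_finrank_ker_of_comp_self_eq_zero {K V : Type*} [DivisionRing K]
    [AddCommGroup V] [Module K V] [FiniteDimensional K V] {f : V →ₗ[K] V} (hf : f ∘ₗ f = 0) :
    finrank K V ≤ 2 * finrank K (ker f) := by
  have := Submodule.finrank_mono (range_le_ker_iff.2 hf)
  have := finrank_range_add_finrank_ker f
  omega

section Algebra

variable {F A : Type*} [Field F] [Ring A] [Algebra F A]

theorem exists_mem_notMem_range_algebraMap_of_one_lt_finrank {V : Submodule F A}
    (hV : 1 < finrank F V) : ∃ v ∈ V, v ∉ Set.range (algebraMap F A) := by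
  by_contra! h
  have hle : V ≤ Subalgebra.toSubmodule (⊥ : Subalgebra F A) :=
    fun v hv => Algebra.mem_bot.2 (h v hv)
  rw [Algebra.toSubmodule_bot, Submodule.one_eq_span] at hle
  have := Submodule.finrank_mono hle
  have := finrank_span_le_card (R := F) ({1} : Set A)
  simp only [Set.toFinset_singleton, Finset.card_singleton] at this
  omega

theorem linearIndependent_one_of_notMem_range_algebraMap {w : A}
    (hw : w ∉ Set.range (algebraMap F A)) : LinearIndependent F ![1, w] := by
  refine LinearIndependent.pair_iff.2 fun s t hst => ?_
  rcases eq_or_ne t 0 with rfl | ht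
  · refine ⟨by_contra fun hs => hw ⟨0, ?_⟩, rfl⟩
    rw [zero_smul, add_zero, smul_eq_zero] at hst
    have : Subsingleton A := subsingleton_of_zero_eq_one (hst.resolve_left hs).symm
    exact Subsingleton.elim _ _
  · have htw : t • w = -(s • 1) := eq_neg_of_add_eq_zero_right hst
    refine absurd ⟨-(t⁻¹ * s), ?_⟩ hw
    rw [Algebra.algebraMap_eq_smul_one, neg_smul, mul_smul, ← smul_neg, ← htw, inv_smul_smul₀ ht]

theorem sq_mem_span_of_finrank_adjoin_le_two [FiniteDimensional F A] {w : A}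
    (hw : w ∉ Set.range (algebraMap F A)) (h : finrank F (Algebra.adjoin F {w}) ≤ 2) :
    w ^ 2 ∈ Submodule.span F {1, w} := by
  have hle : Submodule.span F {1, w} ≤ Subalgebra.toSubmodule (Algebra.adjoin F {w}) := by
    rw [Submodule.span_le, Set.insert_subset_iff, Set.singleton_subset_iff]
    exact ⟨(Algebra.adjoin F {w}).one_mem, Algebra.self_mem_adjoin_singleton F w⟩
  have h2 : finrank F (Submodule.span F {1, w}) = 2 := by
    have := finrank_span_eq_card (linearIndependent_one_of_notMem_range_algebraMap hw)
    rwa [Matrix.range_cons_cons_empty] at this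
  rw [Submodule.eq_of_le_of_finrank_le hle (h2 ▸ h)]
  exact pow_mem (Algebra.self_mem_adjoin_singleton F w) 2

theorem exists_smul_isArtinSchreier_or_isSquareCentral [CharP A 2] {w : A}
    (hw : w ^ 2 ∈ Submodule.span F {1, w}) :
    ∃ t : F, t ≠ 0 ∧ (IsArtinSchreier F (t • w) ∨ IsSquareCentral F (t • w)) := by
  obtain ⟨α, β, hαβ⟩ := Submodule.mem_span_pair.1 hw
  rcases eq_or_ne β 0 with rfl | hβ
  · refine ⟨1, one_ne_zero, .inr ⟨α, ?_⟩⟩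
    rw [one_smul, ← hαβ, zero_smul, add_zero, Algebra.algebraMap_eq_smul_one]
  · refine ⟨β⁻¹, inv_ne_zero hβ, .inl ⟨β⁻¹ * β⁻¹ * α, ?_⟩⟩
    rw [smul_pow, ← hαβ, pow_two, smul_add, smul_smul, smul_smul, inv_mul_cancel_right₀ hβ,
      add_assoc, CharTwo.add_self_eq_zero, add_zero, Algebra.algebraMap_eq_smul_one]

variable [CharP A 2] {x : A}

theorem IsArtinSchreier.mul_commutator (hx : IsArtinSchreier F x) (z : A) :
    x * (x * z - z * x) = (x * z - z * x) * (x + 1) := by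
  obtain ⟨a, ha⟩ := hx
  have key : x * (x * z - z * x) = (x * z - z * x) * (x + 1) +
      ((x ^ 2 + x) * z - z * (x ^ 2 + x)) + 2 * (z * x ^ 2 - x * z * x - x * z + z * x) := by
    noncomm_ring
  rw [key, ← ha, Algebra.commutes, sub_self, add_zero, CharTwo.two_eq_zero, zero_mul, add_zero]

theorem IsArtinSchreier.commute_add_add_commutator (hx : IsArtinSchreier F x) (z : A) :
    Commute (x + z + (x * z - z * x)) x := by
  have key : (x + z + (x * z - z * x)) * x = x * (x + z + (x * z - z * x)) +
      ((x * z - z * x) * (x + 1) - x * (x * z - z * x)) + 2 * (z * x - x * z) := by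
    noncomm_ring
  rw [Commute, SemiconjBy, key, ← hx.mul_commutator z, sub_self, add_zero, CharTwo.two_eq_zero,
    zero_mul, add_zero]

theorem IsArtinSchreier.isSquareCentral_commutator {z : A} (hx : IsArtinSchreier F x)
    (hz : IsArtinSchreier F z) (h : x + z + (x * z - z * x) ∈ Set.range (algebraMap F A)) :
    IsSquareCentral F (x * z - z * x) := by
  obtain ⟨a, ha⟩ := hx
  obtain ⟨b, hb⟩ := hz
  obtain ⟨f, hf⟩ := h
  have hsq : (x + z) ^ 2 = (x ^ 2 + x) + (z ^ 2 + z) + (x + z + (x * z - z * x)) -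
      2 * (x + z - z * x) := by
    noncomm_ring
  rw [CharTwo.two_eq_zero (R := A), zero_mul, sub_zero, ← ha, ← hb, ← hf] at hsq
  refine ⟨f ^ 2 - (a + b + f), ?_⟩
  rw [eq_sub_of_add_eq' hf.symm, sub_pow_char_of_commute _ (Algebra.commutes f (x + z)), hsq]
  simp only [map_sub, map_add, map_pow]

theorem IsArtinSchreier.commutator_commutator (hx : IsArtinSchreier F x) (v : A) :
    x * (x * v - v * x) - (x * v - v * x) * x = x * v - v * x := by
  obtain ⟨a, ha⟩ := hx
  have key : x * (x * v - v * x) - (x * v - v * x) * x =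
      x * v - v * x - ((x ^ 2 + x) * v - v * (x ^ 2 + x)) + 2 * (x ^ 2 * v - x * v * x) := by
    noncomm_ring
  rw [key, ← ha, Algebra.commutes, sub_self, sub_zero, CharTwo.two_eq_zero, zero_mul, add_zero]

end Algebra

section DivisionRing

variable {D : Type*} [DivisionRing D] {x z : D}

theorem eq_zero_of_add_mul_eq_zero_of_not_commute (hxz : ¬Commute x z) {f₀ f₁ : D}
    (h₀ : Commute f₀ z) (h₁ : Commute f₁ z) (h : f₀ + f₁ * x = 0) : f₀ = 0 ∧ f₁ = 0 := by
  rcases eq_or_ne f₁ 0 with rfl | hf₁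
  · simpa using h
  · refine absurd ?_ hxz
    have hx : x = -(f₁⁻¹ * f₀) := by
      rw [eq_neg_iff_add_eq_zero, ← mul_right_inj' hf₁, mul_add, ← mul_assoc, mul_inv_cancel₀ hf₁,
        one_mul, add_comm, h, mul_zero]
    rw [hx]
    exact ((h₁.inv_left₀).mul_left h₀).neg_left

theorem linearIndependent_one_mul_of_le_centralizer {F : Type*} [CommRing F] [Algebra F D]
    (hxz : ¬Commute x z) (K : Subalgebra F D) (hK : K ≤ Subalgebra.centralizer F {x, z}) :
    LinearIndependent K ![1, x, z, x * z] := by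
  have hKx (k : K) : Commute x k := hK k.2 x (by simp)
  have hKz (k : K) : Commute z k := hK k.2 z (by simp)
  rw [Fintype.linearIndependent_iff]
  intro g hg
  simp only [Fin.sum_univ_four, Matrix.cons_val, Subalgebra.smul_def, smul_eq_mul, mul_one] at hg
  have hcomm : x * (g 0 + g 1 * x + g 2 * z + g 3 * (x * z)) -
      (g 0 + g 1 * x + g 2 * z + g 3 * (x * z)) * x = (g 2 + g 3 * x) * (x * z - z * x) := by
    simp only [mul_add, ← mul_assoc, (hKx _).eq]
    noncomm_ring
  rw [hg, mul_zero, zero_mul, sub_zero, eq_comm, mul_eq_zero, sub_eq_zero] at hcomm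
  obtain ⟨h₂, h₃⟩ := eq_zero_of_add_mul_eq_zero_of_not_commute hxz (hKz _).symm (hKz _).symm
    (hcomm.resolve_right hxz)
  rw [h₂, h₃, zero_mul, zero_mul, add_zero, add_zero] at hg
  obtain ⟨h₀, h₁⟩ := eq_zero_of_add_mul_eq_zero_of_not_commute hxz (hKz _).symm (hKz _).symm hg
  intro i
  fin_cases i <;> simp_all

variable {F : Type*} [Field F] [Algebra F D]

theorem finrank_adjoin_le_two_of_commute (hcentral : Subalgebra.center F D = ⊥)
    (hdim : finrank F D = 16) {w : D} (hxz : ¬Commute x z) (hwx : Commute w x)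
    (hwz : Commute w z) : finrank F (Algebra.adjoin F {w}) ≤ 2 := by
  have : FiniteDimensional F D := Module.finite_of_finrank_pos (by omega)
  set K := Algebra.adjoin F {w}
  let _ : DivisionRing K := divisionRingOfFiniteDimensional F K
  have : Module.Finite K D := .of_restrictScalars_finite F K D
  have hK : K ≤ Subalgebra.centralizer F {x, z} := by
    rw [Algebra.adjoin_le_iff, Set.singleton_subset_iff, SetLike.mem_coe,
      Subalgebra.mem_centralizer_iff]
    rintro g (rfl | rfl)
    exacts [hwx.eq.symm, hwz.eq.symm]
  have hind := linearIndependent_one_mul_of_le_centralizer hxz K hK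
  have h4 : 4 ≤ finrank K D := by simpa using hind.fintype_card_le_finrank
  have htower : finrank F K * finrank K D = 16 := hdim ▸ Module.finrank_mul_finrank F K D
  have hK4 : finrank F K ≠ 4 := by
    intro hK4
    rw [hK4] at htower
    have hspan := hind.span_eq_top_of_card_eq_finrank (by simp; omega)
    have hw (v : D) : Commute w v := by
      obtain ⟨g, rfl⟩ :=
        (Submodule.mem_span_range_iff_exists_fun K).1 (hspan ▸ Submodule.mem_top (x := v))
      refine Commute.sum_right _ _ _ fun i _ => ?_
      rw [Subalgebra.smul_def]
      refine .mul_right (Algebra.commute_of_mem_adjoin_singleton_of_commute (g i).2 (.refl w)) ?_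
      fin_cases i
      exacts [Commute.one_right w, hwx, hwz, hwx.mul_right hwz]
    have hwF : w ∈ (⊥ : Subalgebra F D) :=
      hcentral ▸ Subalgebra.mem_center_iff.2 fun v => (hw v).eq.symm
    have hKbot : K = ⊥ := le_bot_iff.1 (Algebra.adjoin_le (Set.singleton_subset_iff.2 hwF))
    rw [hKbot, Subalgebra.finrank_bot] at hK4
    omega
  have hpos : 0 < finrank F K := Module.finrank_pos
  have hle : finrank F K ≤ 4 := by nlinarith
  interval_cases h : finrank F K <;> omega

variable [CharP D 2] [FiniteDimensional F D] {c : D}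

theorem IsArtinSchreier.two_mul_finrank_ker_commutator (hx : IsArtinSchreier F x) (hc0 : c ≠ 0)
    (hxc : x * c = c * (x + 1)) :
    2 * finrank F (ker (mulLeft F x - mulRight F x)) = finrank F D := by
  set δ := mulLeft F x - mulRight F x
  have hδ (v : D) : δ v = x * v - v * x := rfl
  have hδc (v : D) : δ (c * v) = c * (v + δ v) := by
    rw [hδ, hδ, ← mul_assoc, hxc]
    noncomm_ring
  have hc : Function.Injective (mulLeft F c) := mul_right_injective₀ hc0
  have hker : (ker δ).map (mulLeft F c) ≤ range δ := by
    rintro _ ⟨v, hv, rfl⟩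
    exact ⟨c * v, by rw [hδc, mem_ker.1 hv, add_zero]; rfl⟩
  have hrange : (range δ).map (mulLeft F c) ≤ ker δ := by
    rintro _ ⟨_, ⟨u, rfl⟩, rfl⟩
    rw [mem_ker, mulLeft_apply, hδc, hδ (δ u), hδ u, hx.commutator_commutator,
      CharTwo.add_self_eq_zero, mul_zero]
  have := Submodule.finrank_mono hker
  have := Submodule.finrank_mono hrange
  have := (Submodule.equivMapOfInjective _ hc (ker δ)).finrank_eq
  have := (Submodule.equivMapOfInjective _ hc (range δ)).finrank_eq
  have := finrank_range_add_finrank_ker δ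
  omega

theorem IsArtinSchreier.exists_notMem_range_commute (hdim : 4 < finrank F D)
    (hx : IsArtinSchreier F x) (hc0 : c ≠ 0) (hc : IsSquareCentral F c)
    (hxc : x * c = c * (x + 1)) :
    ∃ w ∉ Set.range (algebraMap F D), Commute w x ∧ Commute w c := by
  set S := ker (mulLeft F x - mulRight F x)
  have hS : 2 * finrank F S = finrank F D := hx.two_mul_finrank_ker_commutator hc0 hxc
  set T : D →ₗ[F] D := mulLeft F c⁻¹ ∘ₗ mulRight F c - LinearMap.id
  have hT (v : D) : T v = c⁻¹ * (v * c) - v := rfl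
  have hTT (v : D) : T (T v) = 0 := by
    obtain ⟨μ, hμ⟩ := hc
    have hconj : c⁻¹ * (c⁻¹ * (v * c) * c) = v := by
      calc c⁻¹ * (c⁻¹ * (v * c) * c) = (c ^ 2)⁻¹ * (v * c ^ 2) := by
            simp only [pow_two, mul_inv_rev, mul_assoc]
        _ = v := by
          rw [← hμ, ← Algebra.commutes, ← mul_assoc, hμ, inv_mul_cancel₀ (pow_ne_zero 2 hc0),
            one_mul]
    rw [hT, hT, sub_mul, mul_sub, hconj, CharTwo.sub_eq_add, CharTwo.sub_eq_add,
      CharTwo.sub_eq_add, add_comm v, CharTwo.add_self_eq_zero]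
  have hTS : ∀ v ∈ S, T v ∈ S := by
    intro v hv'
    have hv : Commute x v := sub_eq_zero.1 hv'
    have hx1 : c⁻¹ * (x - 1) * c = x := by
      rw [mul_assoc, sub_mul, one_mul, hxc, mul_add_one, add_sub_cancel_right, ← mul_assoc,
        inv_mul_cancel₀ hc0, one_mul]
    have hconj : Commute x (c⁻¹ * (v * c)) := by
      have h1 : Commute (x - 1) v := hv.sub_left (Commute.one_left v)
      rw [← hx1, Commute, SemiconjBy]
      simp only [mul_assoc, mul_inv_cancel_left₀ hc0]
      rw [← mul_assoc (x - 1), h1.eq, mul_assoc]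
    exact (ker _).sub_mem (sub_eq_zero.2 hconj.eq) hv'
  have hT' : T.restrict hTS ∘ₗ T.restrict hTS = 0 := by
    ext v
    exact hTT v
  have := finrank_le_two_mul_finrank_ker_of_comp_self_eq_zero hT'
  obtain ⟨_, ⟨w, hw, rfl⟩, hwF⟩ := exists_mem_notMem_range_algebraMap_of_one_lt_finrank
    (V := (ker (T.restrict hTS)).map S.subtype) (by rw [Submodule.finrank_map_subtype_eq]; omega)
  have hwc : c⁻¹ * (w * c) = w := sub_eq_zero.1 (congrArg Subtype.val hw)
  refine ⟨w, hwF, (sub_eq_zero.1 w.2).symm, ?_⟩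
  rw [Commute, SemiconjBy, ← mul_inv_cancel_left₀ hc0 (w * c : D), hwc]

end DivisionRing

theorem exists_commuting_of_artinSchreier_general (F A : Type*) [Field F] [CharP F 2]
    [DivisionRing A] [Algebra F A]
    (hcentral : Subalgebra.center F A = ⊥) (hdim : Module.finrank F A = 16)
    (x z : A) (hx : IsArtinSchreier F x) (hz : IsArtinSchreier F z)
    (hne : x * z ≠ z * x) :
    ∃ w : A, w ∉ Set.range (algebraMap F A) ∧
      (IsArtinSchreier F w ∨ IsSquareCentral F w) ∧
      w * x = x * w ∧ w * z = z * w := by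
  have : CharP A 2 := charP_of_injective_algebraMap' F 2
  have : FiniteDimensional F A := Module.finite_of_finrank_pos (by omega)
  obtain ⟨w, hwF, hwx, hwz⟩ : ∃ w ∉ Set.range (algebraMap F A), Commute w x ∧ Commute w z := by
    by_cases hp : x + z + (x * z - z * x) ∈ Set.range (algebraMap F A)
    · obtain ⟨w, hwF, hwx, hwc⟩ := hx.exists_notMem_range_commute (by omega)
        (sub_ne_zero.2 hne) (hx.isSquareCentral_commutator hz hp) (hx.mul_commutator z)
      obtain ⟨f, hf⟩ := hp
      have hzf : z = algebraMap F A f - x - (x * z - z * x) := by rw [hf]; abel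
      refine ⟨w, hwF, hwx, ?_⟩
      rw [hzf]
      exact ((Algebra.commute_algebraMap_right f w).sub_right hwx).sub_right hwc
    · have hsymm : x + z + (x * z - z * x) = z + x + (z * x - x * z) := by
        rw [add_comm x z, ← neg_sub, CharTwo.neg_eq]
      exact ⟨_, hp, hx.commute_add_add_commutator z, hsymm ▸ hz.commute_add_add_commutator x⟩
  have hquad := finrank_adjoin_le_two_of_commute hcentral hdim hne hwx hwz
  obtain ⟨t, ht, hw⟩ :=
    exists_smul_isArtinSchreier_or_isSquareCentral (sq_mem_span_of_finrank_adjoin_le_two hwF hquad)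
  refine ⟨t • w, ?_, hw, (hwx.smul_left t).eq, (hwz.smul_left t).eq⟩
  rintro ⟨f, hf⟩
  exact hwF ⟨t⁻¹ * f, by rw [map_mul, hf, ← Algebra.smul_def, inv_smul_smul₀ ht]⟩

/-- If `x` and `z` are non-commuting Artin–Schreier elements of a biquaternion division
algebra `A`, then there exists `w ∉ F·1`, either Artin–Schreier or square-central, that
commutes with both `x` and `z`. -/
theorem exists_commuting_of_artinSchreier (F A : Type*) [Field F] [CharP F 2]
    [DivisionRing A] [Algebra F A]
    (hcentral : Subalgebra.center F A = ⊥) (hdim : Module.finrank F A = 16)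
    (hbiquat : ∃ q : A × A × A × A, IsQuadruple F q)
    (x z : A) (hx : IsArtinSchreier F x) (hz : IsArtinSchreier F z)
    (hne : x * z ≠ z * x) :
    ∃ w : A, w ∉ Set.range (algebraMap F A) ∧
      (IsArtinSchreier F w ∨ IsSquareCentral F w) ∧
      w * x = x * w ∧ w * z = z * w :=
  exists_commuting_of_artinSchreier_general F A hcentral hdim x z hx hz hne
end

section
/- If Q = (x, y, z, u) and Q' = (x', y, z', u) are quadruples of generators of A sharing the same square-central generators y and u, then there exist quadruples of generators Q₁ and Q₂ such that Q and Q₁ are related by a step of type Λ₁, Q₁ and Q₂ are related by a step of type Ω_i, and Q₂ and Q' are related by a step of type Λ₁. -/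
/-- Swapping the two pairs of a quadruple: `(x, y, z, u) ↦ (z, u, x, y)`. -/
def quadSwap {A : Type*} (q : A × A × A × A) : A × A × A × A :=
  (q.2.2.1, q.2.2.2, q.1, q.2.1)

/-- At least three of the four entries agree. -/
def AgreeThree {A : Type*} (q r : A × A × A × A) : Prop :=
  (q.1 = r.1 ∧ q.2.1 = r.2.1 ∧ q.2.2.1 = r.2.2.1) ∨
  (q.1 = r.1 ∧ q.2.1 = r.2.1 ∧ q.2.2.2 = r.2.2.2) ∨
  (q.1 = r.1 ∧ q.2.2.1 = r.2.2.1 ∧ q.2.2.2 = r.2.2.2) ∨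
  (q.2.1 = r.2.1 ∧ q.2.2.1 = r.2.2.1 ∧ q.2.2.2 = r.2.2.2)

/-- A step of type `Λ₁`: after possibly pair-swapping the target quadruple, at most one
generator is changed. -/
def Lambda1Step {A : Type*} (q q' : A × A × A × A) : Prop :=
  AgreeThree q q' ∨ AgreeThree q (quadSwap q')

/-- The relation underlying the `Ω_s` step: `x` and `z` are preserved and `y` and `u` are
multiplied by `a + b (x + z)` for some `a, b ∈ F`. -/
def OmegaSRel (F : Type*) {A : Type*} [Field F] [Ring A] [Algebra F A]
    (q r : A × A × A × A) : Prop :=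
  match q, r with
  | (x, y, z, u), (x', y', z', u') =>
    x' = x ∧ z' = z ∧ ∃ a b : F,
      y' = (a • (1 : A) + b • (x + z)) * y ∧ u' = (a • (1 : A) + b • (x + z)) * u

/-- A step of type `Ω_s`, up to pair-swapping the target quadruple. -/
def OmegaSStep (F : Type*) {A : Type*} [Field F] [Ring A] [Algebra F A]
    (q q' : A × A × A × A) : Prop :=
  OmegaSRel F q q' ∨ OmegaSRel F q (quadSwap q')

/-- The relation underlying the `Ω_i` step: `y` and `u` are preserved and an element of the
form `a·y·u` is added to `x` and `z` for some `a ∈ F`. -/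
def OmegaIRel (F : Type*) {A : Type*} [Field F] [Ring A] [Algebra F A]
    (q r : A × A × A × A) : Prop :=
  match q, r with
  | (x, y, z, u), (x', y', z', u') =>
    y' = y ∧ u' = u ∧ ∃ a : F, x' = x + a • (y * u) ∧ z' = z + a • (y * u)

/-- A step of type `Ω_i`, up to pair-swapping the target quadruple. -/
def OmegaIStep (F : Type*) {A : Type*} [Field F] [Ring A] [Algebra F A]
    (q q' : A × A × A × A) : Prop :=
  OmegaIRel F q q' ∨ OmegaIRel F q (quadSwap q')

/-- The relation underlying the `Ω_c` step: `y` and `z` are preserved, `x` changes to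
`x + b y (1 + b y)⁻¹ z` and `u` changes to `(1 + b y) u` for some `b ∈ F` with `1 + b y`
invertible. -/
def OmegaCRel (F : Type*) {A : Type*} [Field F] [DivisionRing A] [Algebra F A]
    (q r : A × A × A × A) : Prop :=
  match q, r with
  | (x, y, z, u), (x', y', z', u') =>
    y' = y ∧ z' = z ∧ ∃ b : F, IsUnit (1 + b • y) ∧
      x' = x + (b • y) * (1 + b • y)⁻¹ * z ∧ u' = (1 + b • y) * u

/-- A step of type `Ω_c`, up to pair-swapping the target quadruple. -/
def OmegaCStep (F : Type*) {A : Type*} [Field F] [DivisionRing A] [Algebra F A]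
    (q q' : A × A × A × A) : Prop :=
  OmegaCRel F q q' ∨ OmegaCRel F q (quadSwap q')


section AuxLemmas

variable {F A : Type*} [Field F] [DivisionRing A] [Algebra F A]

lemma char2_swap {R : Type*} [Ring R] [CharP R 2] {a b c : R} (h : a + b = c) : b = a + c := by
  rw [← h, ← add_assoc, CharTwo.add_self_eq_zero, zero_add]

lemma char2_eq {R : Type*} [Ring R] [CharP R 2] {a b : R} (h : a + b = 0) : b = a := by
  have := char2_swap h; simpa using this

lemma char2_swap2 {R : Type*} [Ring R] [CharP R 2] {a b c : R} (h : a + b = c) : a = c + b := by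
  rw [← h, add_assoc, CharTwo.add_self_eq_zero, add_zero]

lemma inv_mem_centralizer {s : Set A} {a : A} (ha : a ∈ Subalgebra.centralizer F s) :
    a⁻¹ ∈ Subalgebra.centralizer F s := by
  rw [Subalgebra.mem_centralizer_iff] at ha ⊢
  intro g hg
  rcases eq_or_ne a 0 with rfl | h
  · simp
  · have hga := ha g hg
    calc g * a⁻¹ = a⁻¹ * (a * g) * a⁻¹ := by
          rw [← mul_assoc, inv_mul_cancel₀ h, one_mul]
      _ = a⁻¹ * (g * a) * a⁻¹ := by rw [hga]
      _ = a⁻¹ * g := by rw [mul_assoc, mul_assoc, mul_inv_cancel₀ h, mul_one]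

lemma finrank_centralizer_mul (s : Set A) :
    Module.finrank F (Subalgebra.centralizer F s) *
      Module.finrank (Subalgebra.centralizer F s) A = Module.finrank F A := by
  set S := Subalgebra.centralizer F s with hS
  letI : DivisionRing S := DivisionRing.ofIsUnitOrEqZero (fun a => by
    rcases eq_or_ne a 0 with rfl | h
    · exact Or.inr rfl
    · have h' : (a : A) ≠ 0 := fun hh => h (Subtype.ext hh)
      exact Or.inl (isUnit_iff_exists.mpr ⟨⟨(a : A)⁻¹, inv_mem_centralizer a.2⟩,
        Subtype.ext (mul_inv_cancel₀ h'), Subtype.ext (inv_mul_cancel₀ h')⟩))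
  exact Module.finrank_mul_finrank F S A

set_option maxHeartbeats 1000000 in
lemma key_decomp [CharP F 2] (hdim : Module.finrank F A = 16)
    (x y z u : A) (hQ : IsQuadruple F (x, y, z, u)) {d : A}
    (hdy : d * y = y * d) (hdu : d * u = u * d) :
    ∃ a b c f : F, d = a • (1 : A) + b • y + c • u + f • (y * u) := by
  obtain ⟨hy0, hu0, hASx, hSCy, hASz, hSCu, hxy, hxz, hxu, hyz, hyu, hzu⟩ := hQ
  haveI : CharP A 2 := charP_of_injective_ringHom (algebraMap F A).injective 2
  haveI : FiniteDimensional F A := FiniteDimensional.of_finrank_pos (by omega)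
  have hyx : y * x = x * y + y := char2_swap hxy
  have huz : u * z = z * u + u := char2_swap hzu
  have hyux : (y * u) * x = x * (y * u) + y * u := by
    rw [mul_assoc, ← hxu, ← mul_assoc, hyx, add_mul, mul_assoc]
  have hyuz : (y * u) * z = z * (y * u) + y * u := by
    rw [mul_assoc, huz, mul_add, ← mul_assoc, hyz, mul_assoc]
  have hind : LinearIndependent F ![(1 : A), y, u, y * u] := by
    rw [Fintype.linearIndependent_iff]
    intro g hg
    rw [Fin.sum_univ_four] at hg
    simp only [Matrix.cons_val_zero, Matrix.cons_val_one, Matrix.head_cons, Matrix.cons_val_two,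
      Matrix.tail_cons, Matrix.cons_val_three, Matrix.head_fin_const] at hg
    have key1 : x * (g 0 • (1:A) + g 1 • y + g 2 • u + g 3 • (y*u)) +
        (g 0 • (1:A) + g 1 • y + g 2 • u + g 3 • (y*u)) * x = g 1 • y + g 3 • (y*u) := by
      simp only [mul_add, add_mul, mul_one, one_mul, mul_smul_comm, smul_mul_assoc, hyx, hyux,
        ← hxu, smul_add]
      abel_nf
      simp [CharTwo.two_zsmul, CharTwo.two_nsmul, CharTwo.two_eq_zero]
    rw [hg, mul_zero, zero_mul, add_zero] at key1
    have key2 : z * (g 1 • y + g 3 • (y*u)) + (g 1 • y + g 3 • (y*u)) * z = g 3 • (y*u) := by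
      simp only [mul_add, add_mul, mul_smul_comm, smul_mul_assoc, hyz, hyuz, smul_add]
      abel_nf
      simp [CharTwo.two_zsmul, CharTwo.two_nsmul, CharTwo.two_eq_zero]
    rw [← key1, mul_zero, zero_mul, add_zero] at key2
    have hyu0 : y * u ≠ 0 := mul_ne_zero hy0 hu0
    have h3 : g 3 = 0 := by
      rcases smul_eq_zero.mp key2.symm with h | h
      · exact h
      · exact absurd h hyu0
    have h1 : g 1 = 0 := by
      rw [h3, zero_smul, add_zero] at key1
      rcases smul_eq_zero.mp key1.symm with h | h
      · exact h
      · exact absurd h hy0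
    rw [h1, h3, zero_smul, zero_smul, add_zero, add_zero] at hg
    have key3 : z * (g 0 • (1:A) + g 2 • u) + (g 0 • (1:A) + g 2 • u) * z = g 2 • u := by
      simp only [mul_add, add_mul, mul_one, one_mul, mul_smul_comm, smul_mul_assoc, huz, smul_add]
      abel_nf
      simp [CharTwo.two_zsmul, CharTwo.two_nsmul, CharTwo.two_eq_zero]
    rw [hg, mul_zero, zero_mul, add_zero] at key3
    have h2 : g 2 = 0 := by
      rcases smul_eq_zero.mp key3.symm with h | h
      · exact h
      · exact absurd h hu0
    have h0 : g 0 = 0 := by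
      rw [h2, zero_smul, add_zero] at hg
      rcases smul_eq_zero.mp hg with h | h
      · exact h
      · exact absurd h one_ne_zero
    intro i; fin_cases i <;> assumption
  set S₁ := Subalgebra.centralizer F ({y} : Set A) with hS₁
  set S₂ := Subalgebra.centralizer F ({y, u} : Set A) with hS₂
  set W := Submodule.span F (Set.range ![(1 : A), y, u, y * u]) with hW
  have hWrank : Module.finrank F W = 4 := by
    rw [finrank_span_eq_card hind]; simp
  have hmem1 : (1 : A) ∈ S₂ := one_mem S₂
  have hmemy : y ∈ S₂ := by
    rw [Subalgebra.mem_centralizer_iff]; rintro g (rfl | rfl)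
    · rfl
    · exact hyu.symm
  have hmemu : u ∈ S₂ := by
    rw [Subalgebra.mem_centralizer_iff]; rintro g (rfl | rfl)
    · exact hyu
    · rfl
  have hmemyu : y * u ∈ S₂ := by
    rw [Subalgebra.mem_centralizer_iff]; rintro g (rfl | rfl)
    · rw [mul_assoc, ← hyu]
    · rw [← mul_assoc, ← hyu]
  have hWle : W ≤ Subalgebra.toSubmodule S₂ := by
    rw [Submodule.span_le]
    rintro t ⟨i, rfl⟩
    fin_cases i
    · exact hmem1
    · exact hmemy
    · exact hmemu
    · exact hmemyu
  have hxS1 : x ∉ S₁ := by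
    intro hx
    rw [Subalgebra.mem_centralizer_iff] at hx
    have h := hx y (Set.mem_singleton y)
    rw [← h, CharTwo.add_self_eq_zero] at hxy
    exact hy0 hxy.symm
  have hzS1 : z ∈ S₁ := by
    rw [Subalgebra.mem_centralizer_iff]
    rintro g rfl
    exact hyz
  have hzS2 : z ∉ S₂ := by
    intro hz
    rw [Subalgebra.mem_centralizer_iff] at hz
    have h := hz u (by simp)
    rw [← h, CharTwo.add_self_eq_zero] at hzu
    exact hu0 hzu.symm
  have hS21 : S₂ ≤ S₁ := Subalgebra.centralizer_le F _ _ (by simp)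
  have t1 := finrank_centralizer_mul (F := F) ({y} : Set A)
  have t2 := finrank_centralizer_mul (F := F) ({y, u} : Set A)
  rw [hdim, ← hS₁] at t1
  rw [hdim, ← hS₂] at t2
  have hS1ne : Module.finrank F S₁ ≠ 16 := by
    intro h16
    have : Subalgebra.toSubmodule S₁ = ⊤ := by
      apply Submodule.eq_top_of_finrank_eq
      rw [hdim, Subalgebra.finrank_toSubmodule]
      exact h16
    exact hxS1 (by rw [← Subalgebra.mem_toSubmodule, this]; trivial)
  have nat_aux1 : ∀ n m : ℕ, n * m = 16 → n ≠ 16 → n ≤ 8 := by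
    intro n m h hne
    by_contra hgt
    push_neg at hgt
    rcases m with _ | _ | m
    · omega
    · omega
    · nlinarith
  have nat_aux2 : ∀ n m : ℕ, n * m = 16 → 4 ≤ n → n ≤ 7 → n = 4 := by
    intro n m h h4 h7
    interval_cases n <;> omega
  have ha1 : Module.finrank F S₁ ≤ 8 := nat_aux1 _ _ t1 hS1ne
  have hlt : Module.finrank F S₂ < Module.finrank F S₁ := by
    have hlt' : Subalgebra.toSubmodule S₂ < Subalgebra.toSubmodule S₁ := by
      refine lt_of_le_of_ne (fun t ht => hS21 ht) (fun he => hzS2 ?_)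
      rw [← Subalgebra.mem_toSubmodule, he, Subalgebra.mem_toSubmodule]
      exact hzS1
    have := Submodule.finrank_lt_finrank_of_lt hlt'
    rwa [Subalgebra.finrank_toSubmodule, Subalgebra.finrank_toSubmodule] at this
  have hW4 : 4 ≤ Module.finrank F S₂ := by
    have := Submodule.finrank_mono hWle
    rwa [hWrank, Subalgebra.finrank_toSubmodule] at this
  have ha2 : Module.finrank F S₂ = 4 := nat_aux2 _ _ t2 hW4 (by omega)
  have heq : W = Subalgebra.toSubmodule S₂ := by
    apply Submodule.eq_of_le_of_finrank_le hWle
    rw [hWrank, Subalgebra.finrank_toSubmodule, ha2]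
  have hdS2 : d ∈ Subalgebra.toSubmodule S₂ := by
    rw [Subalgebra.mem_toSubmodule, Subalgebra.mem_centralizer_iff]
    rintro g (rfl | rfl)
    · exact hdy.symm
    · exact hdu.symm
  rw [← heq, hW, Submodule.mem_span_range_iff_exists_fun] at hdS2
  obtain ⟨cc, hc⟩ := hdS2
  refine ⟨cc 0, cc 1, cc 2, cc 3, ?_⟩
  rw [← hc, Fin.sum_univ_four]
  simp

end AuxLemmas

set_option maxHeartbeats 2000000 in
/-- A step of type `Λ₂` preserving the two square-central generators can be achieved by a
`Λ₁` step, followed by an `Ω_i` step, followed by a `Λ₁` step. -/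
theorem lambda2_inseparable_eq_lambda1_omegaI_lambda1 (F A : Type*) [Field F] [CharP F 2]
    [DivisionRing A] [Algebra F A]
    (hcentral : Subalgebra.center F A = ⊥) (hdim : Module.finrank F A = 16)
    (hbiquat : ∃ q : A × A × A × A, IsQuadruple F q)
    (x y z u x' z' : A)
    (hQ : IsQuadruple F (x, y, z, u)) (hQ' : IsQuadruple F (x', y, z', u)) :
    ∃ Q₁ Q₂ : A × A × A × A, IsQuadruple F Q₁ ∧ IsQuadruple F Q₂ ∧
      Lambda1Step (x, y, z, u) Q₁ ∧ OmegaIStep F Q₁ Q₂ ∧ Lambda1Step Q₂ (x', y, z', u) := by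
  have hQc := hQ
  obtain ⟨hy0, hu0, hASx, hSCy, hASz, hSCu, hxy, hxz, hxu, hyz, hyu, hzu⟩ := hQ
  obtain ⟨-, -, hASx', hSCy', hASz', hSCu', hxy', hxz', hxu', hyz', hyu', hzu'⟩ := hQ'
  haveI : CharP A 2 := charP_of_injective_ringHom (algebraMap F A).injective 2
  -- derived commutation rules
  have hyx : y * x = x * y + y := char2_swap hxy
  have huz : u * z = z * u + u := char2_swap hzu
  have hux : u * x = x * u := hxu.symm
  have huy : u * y = y * u := hyu.symm
  have hzx : z * x = x * z := hxz.symm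
  have hzy : z * y = y * z := hyz.symm
  have hyux : (y * u) * x = x * (y * u) + y * u := by
    rw [mul_assoc, hux, ← mul_assoc, hyx, add_mul, mul_assoc]
  have hyuz : (y * u) * z = z * (y * u) + y * u := by
    rw [mul_assoc, huz, mul_add, ← mul_assoc, hyz, mul_assoc]
  have hyuy : (y * u) * y = y * (y * u) := by rw [mul_assoc, huy]
  obtain ⟨bb, hbb⟩ := hSCy
  obtain ⟨gg, hgg⟩ := hSCu
  have hyy : y * y = bb • (1 : A) := by
    rw [← Algebra.algebraMap_eq_smul_one, hbb, pow_two]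
  have huu : u * u = gg • (1 : A) := by
    rw [← Algebra.algebraMap_eq_smul_one, hgg, pow_two]
  have hyyu : y * (y * u) = bb • u := by rw [← mul_assoc, hyy, smul_mul_assoc, one_mul]
  have hyuy2 : (y * u) * y = bb • u := by rw [hyuy, hyyu]
  have huyu : u * (y * u) = gg • y := by
    rw [← mul_assoc, huy, mul_assoc, huu, mul_smul_comm, mul_one]
  have hyuu : (y * u) * u = gg • y := by rw [mul_assoc, huu, mul_smul_comm, mul_one]
  have hyuyu : (y * u) * (y * u) = (gg * bb) • (1 : A) := by
    rw [mul_assoc, huyu, mul_smul_comm, hyy, smul_smul]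
  -- the difference x + x' commutes with y and u
  have hdy : (x + x') * y = y * (x + x') := by
    have e : (x + x') * y + y * (x + x') = (x * y + y * x) + (x' * y + y * x') := by
      simp only [add_mul, mul_add]; abel
    have e0 : (x + x') * y + y * (x + x') = 0 := by
      rw [e, hxy, hxy', CharTwo.add_self_eq_zero]
    exact (char2_eq e0).symm
  have hdu : (x + x') * u = u * (x + x') := by rw [add_mul, hxu, hxu', mul_add]
  obtain ⟨a, b, c, f, hd⟩ := key_decomp hdim x y z u hQc hdy hdu
  have hx' : x' = x + (a • (1 : A) + b • y + c • u + f • (y * u)) := by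
    rw [← hd, ← add_assoc, CharTwo.add_self_eq_zero, zero_add]
  -- show c = 0
  obtain ⟨cx, hcx⟩ := id hASx
  obtain ⟨cx', hcx'⟩ := id hASx'
  have hexpand : ∀ D : A, (x + D) ^ 2 + (x + D) + (x ^ 2 + x) = (x * D + D * x) + D * D + D := by
    intro D
    simp only [pow_two, add_mul, mul_add]
    abel_nf
    simp [CharTwo.two_zsmul, CharTwo.two_nsmul, CharTwo.two_eq_zero]
  have hxd : x * (a • (1:A) + b • y + c • u + f • (y * u)) +
      (a • (1:A) + b • y + c • u + f • (y * u)) * x = b • y + f • (y * u) := by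
    simp only [mul_add, add_mul, mul_one, one_mul, mul_smul_comm, smul_mul_assoc, hyx, hux, hyux,
      smul_add]
    abel_nf
    simp [CharTwo.two_zsmul, CharTwo.two_nsmul, CharTwo.two_eq_zero]
  have hDD : (a • (1:A) + b • y + c • u + f • (y * u)) *
      (a • (1:A) + b • y + c • u + f • (y * u))
      = (a * a + b * b * bb + c * c * gg + f * f * (bb * gg)) • (1:A) := by
    simp only [mul_add, add_mul, mul_one, one_mul, mul_smul_comm, smul_mul_assoc, smul_smul,
      hyy, huu, huy, hyyu, hyuy2, huyu, hyuu, hyuyu]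
    match_scalars <;> ring_nf <;>
      simp [CharTwo.two_eq_zero, mul_comm, mul_assoc, mul_left_comm]
  have hsum : x' ^ 2 + x' + (x ^ 2 + x) = c • u +
      ((a + (a * a + b * b * bb + c * c * gg + f * f * (bb * gg))) • (1 : A)) := by
    rw [hx', hexpand, hxd, hDD]
    match_scalars <;> ring_nf <;>
      simp [CharTwo.two_eq_zero, mul_comm, mul_assoc, mul_left_comm]
  have hcurange : c • u ∈ Set.range (algebraMap F A) := by
    have hrearr : c • u = (x' ^ 2 + x' + (x ^ 2 + x)) +
        ((a + (a * a + b * b * bb + c * c * gg + f * f * (bb * gg))) • (1 : A)) := by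
      rw [hsum, add_assoc, CharTwo.add_self_eq_zero, add_zero]
    rw [hrearr]
    refine ⟨cx' + cx + (a + (a * a + b * b * bb + c * c * gg + f * f * (bb * gg))), ?_⟩
    rw [map_add, map_add, hcx', hcx, Algebra.algebraMap_eq_smul_one]
  have hc0 : c = 0 := by
    by_contra hc
    obtain ⟨τ, hτ⟩ := hcurange
    have hue : algebraMap F A (c⁻¹ * τ) = u := by
      rw [map_mul, hτ, mul_smul_comm, ← Algebra.smul_def, smul_smul,
        mul_inv_cancel₀ hc, one_smul]
    have hcz : z * u = u * z := by rw [← hue]; exact (Algebra.commutes _ z).symm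
    apply hu0
    rw [← hzu, hcz, CharTwo.add_self_eq_zero]
  rw [hc0, zero_smul, add_zero] at hx'
  -- hx' : x' = x + (a • 1 + b • y + f • (y * u))
  have hx2 : x' = x + (a • (1:A) + b • y) + f • (y * u) := by rw [hx', ← add_assoc]
  -- Q₁
  have hwy : (a • (1:A) + b • y) * y = y * (a • (1:A) + b • y) := by
    simp only [mul_add, add_mul, mul_one, one_mul, mul_smul_comm, smul_mul_assoc]
  have hwz : (a • (1:A) + b • y) * z = z * (a • (1:A) + b • y) := by
    simp only [mul_add, add_mul, mul_one, one_mul, mul_smul_comm, smul_mul_assoc, hyz]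
  have hwu : (a • (1:A) + b • y) * u = u * (a • (1:A) + b • y) := by
    simp only [mul_add, add_mul, mul_one, one_mul, mul_smul_comm, smul_mul_assoc, hyu]
  have hxw : x * (a • (1:A) + b • y) + (a • (1:A) + b • y) * x = b • y := by
    simp only [mul_add, add_mul, mul_one, one_mul, mul_smul_comm, smul_mul_assoc, hyx, smul_add]
    abel_nf
    simp [CharTwo.two_zsmul, CharTwo.two_nsmul, CharTwo.two_eq_zero]
  have hww : (a • (1:A) + b • y) * (a • (1:A) + b • y) = (a * a + b * b * bb) • (1:A) := by
    simp only [mul_add, add_mul, mul_one, one_mul, mul_smul_comm, smul_mul_assoc, smul_smul, hyy]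
    match_scalars <;> ring_nf <;>
      simp [CharTwo.two_eq_zero, mul_comm, mul_assoc, mul_left_comm]
  have hASx1 : IsArtinSchreier F (x + (a • (1:A) + b • y)) := by
    refine ⟨cx + (a + (a * a + b * b * bb)), ?_⟩
    have step : (x + (a • (1:A) + b • y)) ^ 2 + (x + (a • (1:A) + b • y)) =
        (x ^ 2 + x) + ((a + (a * a + b * b * bb)) • (1:A)) := by
      have h1 := char2_swap2 (hexpand (a • (1:A) + b • y))
      rw [hxw, hww] at h1
      rw [h1]
      match_scalars <;> ring_nf <;>
        simp [CharTwo.two_eq_zero, mul_comm, mul_assoc, mul_left_comm]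
    rw [step, map_add, hcx, Algebra.algebraMap_eq_smul_one]
  have hx1y : (x + (a • (1:A) + b • y)) * y + y * (x + (a • (1:A) + b • y)) = y := by
    have e : (x + (a • (1:A) + b • y)) * y + y * (x + (a • (1:A) + b • y)) =
        (x * y + y * x) + ((a • (1:A) + b • y) * y + y * (a • (1:A) + b • y)) := by
      simp only [add_mul, mul_add]; abel
    rw [e, hxy, hwy, CharTwo.add_self_eq_zero, add_zero]
  have hx1z : (x + (a • (1:A) + b • y)) * z = z * (x + (a • (1:A) + b • y)) := by
    rw [add_mul, mul_add, hxz, hwz]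
  have hx1u : (x + (a • (1:A) + b • y)) * u = u * (x + (a • (1:A) + b • y)) := by
    rw [add_mul, mul_add, hxu, hwu]
  have hQ1 : IsQuadruple F (x + (a • (1:A) + b • y), y, z, u) :=
    ⟨hy0, hu0, hASx1, ⟨bb, hbb⟩, hASz, ⟨gg, hgg⟩, hx1y, hx1z, hx1u, hyz, hyu, hzu⟩
  -- Q₂
  obtain ⟨cz, hcz⟩ := id hASz
  have hASz2 : IsArtinSchreier F (z + f • (y * u)) := by
    refine ⟨cz + f * f * (gg * bb), ?_⟩
    have core : (z + f • (y * u)) ^ 2 + (z + f • (y * u)) =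
        (z ^ 2 + z) + (f * f * (gg * bb)) • (1:A) := by
      simp only [pow_two, mul_add, add_mul, mul_smul_comm, smul_mul_assoc, smul_smul, hyuz,
        hyuyu, smul_add]
      match_scalars <;> ring_nf <;>
        simp [CharTwo.two_eq_zero, mul_comm, mul_assoc, mul_left_comm]
    rw [core, map_add, hcz, Algebra.algebraMap_eq_smul_one]
  have hASx2 : IsArtinSchreier F (x + (a • (1:A) + b • y) + f • (y * u)) := by
    rw [← hx2]; exact hASx'
  have hx2y : (x + (a • (1:A) + b • y) + f • (y * u)) * y +
      y * (x + (a • (1:A) + b • y) + f • (y * u)) = y := by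
    rw [← hx2]; exact hxy'
  have hx2u : (x + (a • (1:A) + b • y) + f • (y * u)) * u =
      u * (x + (a • (1:A) + b • y) + f • (y * u)) := by
    rw [← hx2]; exact hxu'
  have hbigcomm : (x + (a • (1:A) + b • y) + f • (y * u)) * (z + f • (y * u)) +
      (z + f • (y * u)) * (x + (a • (1:A) + b • y) + f • (y * u)) = 0 := by
    simp only [mul_add, add_mul, mul_one, one_mul, mul_smul_comm, smul_mul_assoc, smul_smul,
      hzx, hzy, hyux, hyuz, hyuy, smul_add]
    abel_nf
    simp [CharTwo.two_zsmul, CharTwo.two_nsmul, CharTwo.two_eq_zero, mul_comm]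
    abel_nf
    simp [CharTwo.two_zsmul, CharTwo.two_nsmul, CharTwo.two_eq_zero]
  have hx2z2 : (x + (a • (1:A) + b • y) + f • (y * u)) * (z + f • (y * u)) =
      (z + f • (y * u)) * (x + (a • (1:A) + b • y) + f • (y * u)) :=
    (char2_eq hbigcomm).symm
  have hyz2 : y * (z + f • (y * u)) = (z + f • (y * u)) * y := by
    simp only [mul_add, add_mul, mul_smul_comm, smul_mul_assoc, hyz, hyuy]
  have hz2u : (z + f • (y * u)) * u + u * (z + f • (y * u)) = u := by
    have h1 : (y * u) * u = y * (u * u) := by rw [mul_assoc]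
    have h2 : u * (y * u) = y * (u * u) := by rw [← mul_assoc, huy, mul_assoc]
    simp only [mul_add, add_mul, mul_smul_comm, smul_mul_assoc, h1, h2]
    calc z * u + f • (y * (u * u)) + (u * z + f • (y * (u * u)))
        = (z * u + u * z) + (f • (y * (u * u)) + f • (y * (u * u))) := by abel
      _ = u := by rw [hzu, CharTwo.add_self_eq_zero, add_zero]
  have hQ2 : IsQuadruple F (x + (a • (1:A) + b • y) + f • (y * u), y, z + f • (y * u), u) :=
    ⟨hy0, hu0, hASx2, ⟨bb, hbb⟩, hASz2, ⟨gg, hgg⟩, hx2y, hx2z2, hx2u, hyz2, hyu, hz2u⟩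
  refine ⟨(x + (a • (1:A) + b • y), y, z, u),
    (x + (a • (1:A) + b • y) + f • (y * u), y, z + f • (y * u), u),
    hQ1, hQ2, ?_, ?_, ?_⟩
  · exact Or.inl (Or.inr (Or.inr (Or.inr ⟨rfl, rfl, rfl⟩)))
  · exact Or.inl ⟨rfl, rfl, f, rfl, rfl⟩
  · exact Or.inl (Or.inr (Or.inl ⟨hx2.symm, rfl, rfl⟩))
end

section
/- Let F be a field of characteristic 2 and let α, β, γ, δ, a, b ∈ F with β ≠ 0, δ ≠ 0, and e := a² + a·b + b²·(α + γ) ≠ 0. Then there is an F-algebra isomorphism [α, β) ⊗_F [γ, δ) ≅ [α, e·β) ⊗_F [γ, e·δ). -/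
open scoped TensorProduct

/-- The relations defining the characteristic two quaternion symbol algebra `[α, β)`:
`x² + x = α`, `y² = β`, `xy + yx = y`. -/
inductive QuatSymbolRel (F : Type*) [CommRing F] (α β : F) :
    FreeAlgebra F (Fin 2) → FreeAlgebra F (Fin 2) → Prop
  | x_rel : QuatSymbolRel F α β
      (FreeAlgebra.ι F (0 : Fin 2) * FreeAlgebra.ι F (0 : Fin 2) + FreeAlgebra.ι F (0 : Fin 2))
      (algebraMap F (FreeAlgebra F (Fin 2)) α)
  | y_rel : QuatSymbolRel F α β
      (FreeAlgebra.ι F (1 : Fin 2) * FreeAlgebra.ι F (1 : Fin 2))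
      (algebraMap F (FreeAlgebra F (Fin 2)) β)
  | xy_rel : QuatSymbolRel F α β
      (FreeAlgebra.ι F (0 : Fin 2) * FreeAlgebra.ι F (1 : Fin 2) +
        FreeAlgebra.ι F (1 : Fin 2) * FreeAlgebra.ι F (0 : Fin 2))
      (FreeAlgebra.ι F (1 : Fin 2))

/-- The characteristic two quaternion symbol algebra `[α, β)` over `F`: the `F`-algebra
generated by `x, y` subject to `x² + x = α`, `y² = β`, `xy + yx = y`. -/
def QuatSymbol (F : Type*) [CommRing F] (α β : F) :=
  RingQuot (QuatSymbolRel F α β)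

noncomputable instance (F : Type*) [CommRing F] (α β : F) : Ring (QuatSymbol F α β) :=
  inferInstanceAs (Ring (RingQuot (QuatSymbolRel F α β)))

noncomputable instance (F : Type*) [CommRing F] (α β : F) : Algebra F (QuatSymbol F α β) :=
  inferInstanceAs (Algebra F (RingQuot (QuatSymbolRel F α β)))

/-! Write `x, y` and `u, v` for the generators of the two factors and `z = x + u`. In
characteristic two `z² = z + (α + γ)`, and both `y` and `v` conjugate `z` to `z + 1`, i.e. act on
`F[z]` by its nontrivial automorphism `m ↦ m̄`. So for `m = c₀ + c₁ z` we get `y m = m̄ y`,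
`v m = m̄ v` and `m m̄ = N(m) = c₀² + c₀c₁ + c₁²(α + γ)`; hence `x, m y, u, m v` satisfy the
relations of `[α, N(m) β) ⊗ [γ, N(m) δ)`. For `m = a + b z` the twist by `m⁻¹ = m̄ / e` undoes the
twist by `m`. -/

theorem add_self_eq_zero_of_charP_two (F : Type*) {T : Type*} [CommRing F] [CharP F 2] [Ring T]
    [Algebra F T] (w : T) : w + w = 0 := by
  rw [← two_smul F w, CharTwo.two_eq_zero, zero_smul]

section

variable {F T : Type*} [CommRing F] [Ring T] [Algebra F T]

theorem algebraMap_add_mul_mul_algebraMap_add_mul {z : T} {s : F}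
    (hz : z * z = z + algebraMap F T s) (d₀ d₁ c₀ c₁ : F) :
    (algebraMap F T d₀ + algebraMap F T d₁ * z) * (algebraMap F T c₀ + algebraMap F T c₁ * z) =
      algebraMap F T (d₀ * c₀ + d₁ * c₁ * s) +
        algebraMap F T (d₀ * c₁ + d₁ * c₀ + d₁ * c₁) * z := by
  simp only [Algebra.algebraMap_eq_smul_one, smul_mul_assoc, mul_smul_comm, one_mul, mul_one,
    add_mul, mul_add, hz]
  module

theorem mul_algebraMap_add_mul {y z : T} (h : y * z = (z + 1) * y) (c₀ c₁ : F) :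
    y * (algebraMap F T c₀ + algebraMap F T c₁ * z) =
      (algebraMap F T (c₀ + c₁) + algebraMap F T c₁ * z) * y := by
  simp only [Algebra.algebraMap_eq_smul_one, smul_mul_assoc, mul_smul_comm, one_mul, mul_one,
    add_mul, mul_add, h]
  module

end

namespace QuatSymbol

variable {F : Type*} [CommRing F] {α β γ δ : F}

variable (F α β) in
noncomputable def mkAlgHom : FreeAlgebra F (Fin 2) →ₐ[F] QuatSymbol F α β :=
  RingQuot.mkAlgHom F (QuatSymbolRel F α β)

variable (F α β) in
noncomputable def X : QuatSymbol F α β := mkAlgHom F α β (FreeAlgebra.ι F 0)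

variable (F α β) in
noncomputable def Y : QuatSymbol F α β := mkAlgHom F α β (FreeAlgebra.ι F 1)

section Relations

variable {T : Type*} [Ring T] [Algebra F T] {x y : T}

structure Relations (α β : F) (x y : T) : Prop where
  x_rel : x * x + x = algebraMap F T α
  y_rel : y * y = algebraMap F T β
  xy_rel : x * y + y * x = y

variable (F α β) in
theorem relations_X_Y : Relations α β (X F α β) (Y F α β) := by
  have hx := RingQuot.mkAlgHom_rel F (QuatSymbolRel.x_rel (α := α) (β := β))
  have hy := RingQuot.mkAlgHom_rel F (QuatSymbolRel.y_rel (α := α) (β := β))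
  have hxy := RingQuot.mkAlgHom_rel F (QuatSymbolRel.xy_rel (α := α) (β := β))
  simp only [map_add, map_mul, AlgHom.commutes] at hx hy hxy
  exact ⟨hx, hy, hxy⟩

theorem Relations.map {T' : Type*} [Ring T'] [Algebra F T'] (h : Relations α β x y)
    (f : T →ₐ[F] T') : Relations α β (f x) (f y) where
  x_rel := by rw [← map_mul, ← map_add, h.x_rel, AlgHom.commutes]
  y_rel := by rw [← map_mul, h.y_rel, AlgHom.commutes]
  xy_rel := by rw [← map_mul, ← map_mul, ← map_add, h.xy_rel]

noncomputable def lift (h : Relations α β x y) : QuatSymbol F α β →ₐ[F] T :=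
  RingQuot.liftAlgHom F ⟨FreeAlgebra.lift F ![x, y], fun _ _ r => by
    cases r <;> simp [h.x_rel, h.y_rel, h.xy_rel]⟩

@[simp] theorem lift_X (h : Relations α β x y) : lift h (X F α β) = x :=
  (RingQuot.liftAlgHom_mkAlgHom_apply F _ _ _).trans (by simp)

@[simp] theorem lift_Y (h : Relations α β x y) : lift h (Y F α β) = y :=
  (RingQuot.liftAlgHom_mkAlgHom_apply F _ _ _).trans (by simp)

variable (F α β) in
theorem adjoin_X_Y : Algebra.adjoin F {X F α β, Y F α β} = ⊤ := by
  have hgen : mkAlgHom F α β ∘ FreeAlgebra.ι F = ![X F α β, Y F α β] := by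
    ext i; fin_cases i <;> rfl
  have hrange : ({X F α β, Y F α β} : Set (QuatSymbol F α β)) =
      mkAlgHom F α β '' Set.range (FreeAlgebra.ι F) := by
    rw [← Set.range_comp, hgen, Matrix.range_cons, Matrix.range_cons, Matrix.range_empty,
      Set.union_empty, Set.singleton_union]
  rw [hrange, Algebra.adjoin_image, FreeAlgebra.adjoin_range_ι, Algebra.map_top,
    AlgHom.range_eq_top]
  exact RingQuot.mkAlgHom_surjective F _

theorem hom_ext {f g : QuatSymbol F α β →ₐ[F] T} (hX : f (X F α β) = g (X F α β))
    (hY : f (Y F α β) = g (Y F α β)) : f = g :=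
  AlgHom.ext_of_adjoin_eq_top (adjoin_X_Y F α β) (by simp [Set.EqOn, hX, hY])

theorem commute_apply_of_commute_X_Y (g : QuatSymbol F α β →ₐ[F] T) {z : T}
    (hX : Commute z (g (X F α β))) (hY : Commute z (g (Y F α β))) (t : QuatSymbol F α β) :
    Commute z (g t) := by
  have : Algebra.adjoin F {X F α β, Y F α β} ≤ (Subalgebra.centralizer F {z}).comap g :=
    Algebra.adjoin_le (by simp [Set.insert_subset_iff, Set.mem_centralizer_iff, hX.eq, hY.eq])
  exact (Subalgebra.mem_centralizer_iff F).1 (this (by simp [adjoin_X_Y])) z rfl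

theorem Relations.twist {m m' : T} {c : F} (h : Relations α β x y) (hxm : Commute x m)
    (hym : y * m = m' * y) (hmm' : m * m' = algebraMap F T c) :
    Relations α (c * β) x (m * y) where
  x_rel := h.x_rel
  y_rel := by
    rw [mul_assoc, ← mul_assoc y, hym, mul_assoc, h.y_rel, ← mul_assoc, hmm', map_mul]
  xy_rel := by rw [← mul_assoc, hxm.eq, mul_assoc, mul_assoc, ← mul_add, h.xy_rel]

structure TensorRelations (α β γ δ : F) (x y u v : T) : Prop where
  left : Relations α β x y
  right : Relations γ δ u v
  commute_x_u : Commute x u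
  commute_x_v : Commute x v
  commute_y_u : Commute y u
  commute_y_v : Commute y v

end Relations

section CharTwo

variable {T : Type*} [CharP F 2] [Ring T] [Algebra F T] {x y u v : T}

theorem Relations.x_mul_x (h : Relations α β x y) :
    x * x = x + algebraMap F T α := by
  rw [← h.x_rel, add_left_comm, add_self_eq_zero_of_charP_two F, add_zero]

theorem Relations.y_mul_x (h : Relations α β x y) : y * x = (x + 1) * y :=
  calc y * x = x * y + (x * y + y * x) := by
        rw [← add_assoc, add_self_eq_zero_of_charP_two F, zero_add]
    _ = (x + 1) * y := by rw [h.xy_rel, add_mul, one_mul]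

theorem TensorRelations.mul_self_x_add_u (h : TensorRelations α β γ δ x y u v) :
    (x + u) * (x + u) = (x + u) + algebraMap F T (α + γ) := by
  have hux : u * x = x * u := h.commute_x_u.eq.symm
  simp only [add_mul, mul_add, h.left.x_mul_x, h.right.x_mul_x, hux, map_add]
  rw [← add_zero (x + u + _), ← add_self_eq_zero_of_charP_two F (x * u)]
  abel

theorem TensorRelations.y_mul_x_add_u (h : TensorRelations α β γ δ x y u v) :
    y * (x + u) = (x + u + 1) * y := by
  rw [mul_add, h.left.y_mul_x, h.commute_y_u.eq]
  noncomm_ring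

theorem TensorRelations.v_mul_x_add_u (h : TensorRelations α β γ δ x y u v) :
    v * (x + u) = (x + u + 1) * v := by
  rw [mul_add, h.right.y_mul_x, ← h.commute_x_v.eq]
  noncomm_ring

theorem TensorRelations.twist {β' δ' : F} (h : TensorRelations α β' γ δ' x y u v) (c₀ c₁ : F)
    (hβ : (c₀ ^ 2 + c₀ * c₁ + c₁ ^ 2 * (α + γ)) * β' = β)
    (hδ : (c₀ ^ 2 + c₀ * c₁ + c₁ ^ 2 * (α + γ)) * δ' = δ) :
    TensorRelations α β γ δ x ((algebraMap F T c₀ + algebraMap F T c₁ * (x + u)) * y) u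
      ((algebraMap F T c₀ + algebraMap F T c₁ * (x + u)) * v) := by
  set m := algebraMap F T c₀ + algebraMap F T c₁ * (x + u)
  set m' := algebraMap F T (c₀ + c₁) + algebraMap F T c₁ * (x + u)
  have hmm' : m * m' = algebraMap F T (c₀ ^ 2 + c₀ * c₁ + c₁ ^ 2 * (α + γ)) := by
    have h2 : (2 : F) = 0 := CharTwo.two_eq_zero
    rw [algebraMap_add_mul_mul_algebraMap_add_mul h.mul_self_x_add_u,
      show c₀ * c₁ + c₁ * (c₀ + c₁) + c₁ * c₁ = 0 by linear_combination (c₀ * c₁ + c₁ ^ 2) * h2,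
      map_zero, zero_mul, add_zero]
    congr 1
    ring
  have hcomm : ∀ w, Commute w (x + u) → Commute w m := fun w hw =>
    (Algebra.commute_algebraMap_right c₀ w).add_right
      ((Algebra.commute_algebraMap_right c₁ w).mul_right hw)
  have hxm := hcomm x ((Commute.refl x).add_right h.commute_x_u)
  have hum := hcomm u (h.commute_x_u.symm.add_right (Commute.refl u))
  have hym : y * m = m' * y := mul_algebraMap_add_mul h.y_mul_x_add_u c₀ c₁
  have hvm : v * m = m' * v := mul_algebraMap_add_mul h.v_mul_x_add_u c₀ c₁
  refine ⟨hβ ▸ h.left.twist hxm hym hmm', hδ ▸ h.right.twist hum hvm hmm', h.commute_x_u,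
    hxm.mul_right h.commute_x_v, hum.symm.mul_left h.commute_y_u, ?_⟩
  calc m * y * (m * v) = m * (m' * (y * v)) := by rw [mul_assoc, ← mul_assoc y, hym, mul_assoc]
    _ = m * (m' * (v * y)) := by rw [h.commute_y_v.eq]
    _ = m * v * (m * y) := by rw [mul_assoc, ← mul_assoc v, hvm, mul_assoc]

end CharTwo

section TensorProduct

open Algebra.TensorProduct

variable (F α β γ δ) in
theorem tensorRelations_tmul :
    TensorRelations α β γ δ (X F α β ⊗ₜ[F] (1 : QuatSymbol F γ δ)) (Y F α β ⊗ₜ 1)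
      ((1 : QuatSymbol F α β) ⊗ₜ[F] X F γ δ) (1 ⊗ₜ Y F γ δ) where
  left := (relations_X_Y F α β).map includeLeft
  right := (relations_X_Y F γ δ).map
    (includeRight : QuatSymbol F γ δ →ₐ[F] QuatSymbol F α β ⊗[F] QuatSymbol F γ δ)
  commute_x_u := (Commute.one_right _).tmul (Commute.one_left _)
  commute_x_v := (Commute.one_right _).tmul (Commute.one_left _)
  commute_y_u := (Commute.one_right _).tmul (Commute.one_left _)
  commute_y_v := (Commute.one_right _).tmul (Commute.one_left _)

variable {T : Type*} [Ring T] [Algebra F T] {x y u v : T}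

noncomputable def tensorLift (h : TensorRelations α β γ δ x y u v) :
    QuatSymbol F α β ⊗[F] QuatSymbol F γ δ →ₐ[F] T :=
  Algebra.TensorProduct.lift (lift h.left) (lift h.right) fun s t => by
    have hu : Commute u (lift h.left s) := commute_apply_of_commute_X_Y _
      (by simpa using h.commute_x_u.symm) (by simpa using h.commute_y_u.symm) s
    have hv : Commute v (lift h.left s) := commute_apply_of_commute_X_Y _
      (by simpa using h.commute_x_v.symm) (by simpa using h.commute_y_v.symm) s
    exact (commute_apply_of_commute_X_Y _ (by simpa using hu.symm) (by simpa using hv.symm) t)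

@[simp] theorem tensorLift_X_tmul_one (h : TensorRelations α β γ δ x y u v) :
    tensorLift h (X F α β ⊗ₜ 1) = x := by
  simp [tensorLift]

@[simp] theorem tensorLift_Y_tmul_one (h : TensorRelations α β γ δ x y u v) :
    tensorLift h (Y F α β ⊗ₜ 1) = y := by
  simp [tensorLift]

@[simp] theorem tensorLift_one_tmul_X (h : TensorRelations α β γ δ x y u v) :
    tensorLift h (1 ⊗ₜ X F γ δ) = u := by
  simp [tensorLift]

@[simp] theorem tensorLift_one_tmul_Y (h : TensorRelations α β γ δ x y u v) :
    tensorLift h (1 ⊗ₜ Y F γ δ) = v := by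
  simp [tensorLift]

theorem tensor_algHom_ext {f g : QuatSymbol F α β ⊗[F] QuatSymbol F γ δ →ₐ[F] T}
    (hx : f (X F α β ⊗ₜ 1) = g (X F α β ⊗ₜ 1)) (hy : f (Y F α β ⊗ₜ 1) = g (Y F α β ⊗ₜ 1))
    (hu : f (1 ⊗ₜ X F γ δ) = g (1 ⊗ₜ X F γ δ)) (hv : f (1 ⊗ₜ Y F γ δ) = g (1 ⊗ₜ Y F γ δ)) :
    f = g :=
  Algebra.TensorProduct.ext (hom_ext hx hy) (hom_ext hu hv)

variable [CharP F 2] {β' δ' : F}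

noncomputable def twistHom (c₀ c₁ : F) (hβ : (c₀ ^ 2 + c₀ * c₁ + c₁ ^ 2 * (α + γ)) * β' = β)
    (hδ : (c₀ ^ 2 + c₀ * c₁ + c₁ ^ 2 * (α + γ)) * δ' = δ) :
    QuatSymbol F α β ⊗[F] QuatSymbol F γ δ →ₐ[F] QuatSymbol F α β' ⊗[F] QuatSymbol F γ δ' :=
  tensorLift ((tensorRelations_tmul F α β' γ δ').twist c₀ c₁ hβ hδ)

/-- `h₀` and `h₁` say that `(c₀ + c₁ z) (d₀ + d₁ z) = 1` where `z² = z + (α + γ)`. -/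
theorem twistHom_comp_twistHom {c₀ c₁ d₀ d₁ : F}
    (hβ : (c₀ ^ 2 + c₀ * c₁ + c₁ ^ 2 * (α + γ)) * β' = β)
    (hδ : (c₀ ^ 2 + c₀ * c₁ + c₁ ^ 2 * (α + γ)) * δ' = δ)
    (hβ' : (d₀ ^ 2 + d₀ * d₁ + d₁ ^ 2 * (α + γ)) * β = β')
    (hδ' : (d₀ ^ 2 + d₀ * d₁ + d₁ ^ 2 * (α + γ)) * δ = δ')
    (h₀ : c₀ * d₀ + c₁ * d₁ * (α + γ) = 1) (h₁ : c₀ * d₁ + c₁ * d₀ + c₁ * d₁ = 0) :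
    (twistHom d₀ d₁ hβ' hδ').comp (twistHom c₀ c₁ hβ hδ) = AlgHom.id F _ := by
  have hprod := algebraMap_add_mul_mul_algebraMap_add_mul
    (tensorRelations_tmul F α β γ δ).mul_self_x_add_u c₀ c₁ d₀ d₁
  rw [h₀, h₁, map_one, map_zero, zero_mul, add_zero] at hprod
  apply tensor_algHom_ext <;>
    simp only [twistHom, AlgHom.comp_apply, AlgHom.id_apply, tensorLift_X_tmul_one,
      tensorLift_Y_tmul_one, tensorLift_one_tmul_X, tensorLift_one_tmul_Y, map_add, map_mul,
      AlgHom.commutes, ← mul_assoc, hprod, one_mul]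

end TensorProduct

end QuatSymbol

theorem quatSymbol_tensor_omegaS_general (F : Type*) [Field F] [CharP F 2] (α β γ δ a b : F)
    (he : a ^ 2 + a * b + b ^ 2 * (α + γ) ≠ 0) :
    Nonempty ((QuatSymbol F α β ⊗[F] QuatSymbol F γ δ) ≃ₐ[F]
      (QuatSymbol F α ((a ^ 2 + a * b + b ^ 2 * (α + γ)) * β) ⊗[F]
        QuatSymbol F γ ((a ^ 2 + a * b + b ^ 2 * (α + γ)) * δ))) := by
  set e := a ^ 2 + a * b + b ^ 2 * (α + γ)
  have h2 : (2 : F) = 0 := CharTwo.two_eq_zero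
  have hnorm : ((a + b) / e) ^ 2 + (a + b) / e * (b / e) + (b / e) ^ 2 * (α + γ) = e⁻¹ := by
    field_simp
    linear_combination (a * b + b ^ 2) * h2
  have h₀ : a * ((a + b) / e) + b * (b / e) * (α + γ) = 1 := by
    field_simp
    ring
  have h₁ : a * (b / e) + b * ((a + b) / e) + b * (b / e) = 0 := by
    field_simp
    linear_combination (a * b + b ^ 2) * h2
  have hβ : (((a + b) / e) ^ 2 + (a + b) / e * (b / e) + (b / e) ^ 2 * (α + γ)) * (e * β) = β :=
    by rw [hnorm, inv_mul_cancel_left₀ he]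
  have hδ : (((a + b) / e) ^ 2 + (a + b) / e * (b / e) + (b / e) ^ 2 * (α + γ)) * (e * δ) = δ :=
    by rw [hnorm, inv_mul_cancel_left₀ he]
  exact ⟨AlgEquiv.ofAlgHom (QuatSymbol.twistHom _ _ hβ hδ) (QuatSymbol.twistHom a b rfl rfl)
    (QuatSymbol.twistHom_comp_twistHom _ _ _ _ h₀ h₁)
    (QuatSymbol.twistHom_comp_twistHom _ _ _ _ (by linear_combination h₀)
      (by linear_combination h₁))⟩

/-- The `Ω_s` step on symbol presentations: with `e = a² + ab + b²(α+γ) ≠ 0`,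
`[α,β) ⊗ [γ,δ) ≅ [α, e·β) ⊗ [γ, e·δ)`. -/
theorem quatSymbol_tensor_omegaS (F : Type*) [Field F] [CharP F 2] (α β γ δ a b : F)
    (hβ : β ≠ 0) (hδ : δ ≠ 0) (he : a ^ 2 + a * b + b ^ 2 * (α + γ) ≠ 0) :
    Nonempty ((QuatSymbol F α β ⊗[F] QuatSymbol F γ δ) ≃ₐ[F]
      (QuatSymbol F α ((a ^ 2 + a * b + b ^ 2 * (α + γ)) * β) ⊗[F]
        QuatSymbol F γ ((a ^ 2 + a * b + b ^ 2 * (α + γ)) * δ))) :=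
  quatSymbol_tensor_omegaS_general F α β γ δ a b he
end
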